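/- Let Σ₆⁻¹ = [[0,0,1],[0,1/12,0],[1,0,0]] be the inverse of Σ₆ over ℚ. Then for each M ∈ {M₀, M_{a₁}, M_{a₂}}, every entry of the matrix (M − I₃)·Σ₆⁻¹ is an integer, whereas the matrix (U − I₃)·Σ₆⁻¹ has at least one non-integer entry. (Thus M₀, M_{a₁}, M_{a₂} act trivially on the discriminant group of the lattice (ℤ³, Σ₆), i.e. lie in O(M̌₆^⊥)*, while U lies in O(M̌₆^⊥) \ O(M̌₆^⊥)*.) -/

import Mathlib

open Matrix

/-- Monodromy matrix around `x = 0` (over ℚ). -/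
def M₀ : Matrix (Fin 3) (Fin 3) ℚ := !![1, 0, 0; 1, 1, 0; -6, -12, 1]

/-- Monodromy matrix around `x = a₁` (over ℚ). -/
def Ma₁ : Matrix (Fin 3) (Fin 3) ℚ := !![0, 0, 1; 0, 1, 0; 1, 0, 0]

/-- Monodromy matrix around `x = a₂` (over ℚ). -/
def Ma₂ : Matrix (Fin 3) (Fin 3) ℚ := !![-24, 120, 25; -10, 49, 10; 25, -120, -24]

/-- The connection matrix `U` (over ℚ). -/
def U : Matrix (Fin 3) (Fin 3) ℚ := !![3, 12, -2; 1, 5, -1; -2, -12, 3]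

/-- `Σ₆⁻¹ = [[0,0,1],[0,1/12,0],[1,0,0]]`, the inverse of `Σ₆` over ℚ. -/
def Sigma6inv : Matrix (Fin 3) (Fin 3) ℚ := !![0, 0, 1; 0, 1/12, 0; 1, 0, 0]

/-! Right multiplication by `Σ₆⁻¹` swaps the outer columns and divides the middle one
by 12. Hence for an integral matrix `M`, the matrix `(M - 1) Σ₆⁻¹` is integral exactly when
the middle column of `M - 1` is divisible by 12. That column is `(0, 0, -12)` for `M₀`, zero
for `M_{a₁}`, `(120, 48, -120)` for `M_{a₂}`, and `(12, 4, -12)` for `U`. -/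

theorem exists_intCast_eq_intCast_div_iff_dvd {K : Type*} [Field K] [CharZero K] (a : ℤ) {d : ℤ}
    (hd : d ≠ 0) : (∃ n : ℤ, (a : K) / d = n) ↔ d ∣ a := by
  have hd' : (d : K) ≠ 0 := Int.cast_ne_zero.mpr hd
  constructor
  · rintro ⟨n, h⟩
    rw [div_eq_iff hd'] at h
    exact ⟨n, by exact_mod_cast h.trans (mul_comm _ _)⟩
  · rintro ⟨c, rfl⟩
    exact ⟨c, by push_cast; field_simp⟩

section Sigma6inv

variable (B : Matrix (Fin 3) (Fin 3) ℚ) (i : Fin 3)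

lemma mul_Sigma6inv_apply_zero : (B * Sigma6inv) i 0 = B i 2 := by
  simp [Sigma6inv, mul_apply, Fin.sum_univ_three]

lemma mul_Sigma6inv_apply_one : (B * Sigma6inv) i 1 = B i 1 / 12 := by
  simp [Sigma6inv, mul_apply, Fin.sum_univ_three, div_eq_mul_inv]

lemma mul_Sigma6inv_apply_two : (B * Sigma6inv) i 2 = B i 0 := by
  simp [Sigma6inv, mul_apply, Fin.sum_univ_three]

end Sigma6inv

theorem exists_intCast_eq_sub_one_mul_Sigma6inv_iff (A : Matrix (Fin 3) (Fin 3) ℤ) :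
    (∀ i j, ∃ n : ℤ, ((A.map (Int.cast : ℤ → ℚ) - 1) * Sigma6inv) i j = n) ↔
      ∀ i, (12 : ℤ) ∣ (A - 1) i 1 := by
  have hcast : A.map (Int.cast : ℤ → ℚ) - 1 = (A - 1).map Int.cast := by
    rw [Matrix.map_sub _ Int.cast_sub, Matrix.map_one _ Int.cast_zero Int.cast_one]
  refine forall_congr' fun i => ?_
  simp only [hcast, Fin.forall_fin_succ, IsEmpty.forall_iff, and_true, Fin.succ_zero_eq_one,
    Fin.succ_one_eq_two, mul_Sigma6inv_apply_zero, mul_Sigma6inv_apply_one,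
    mul_Sigma6inv_apply_two, map_apply, Int.cast_inj, exists_eq', true_and]
  simpa only [Int.cast_ofNat] using
    exists_intCast_eq_intCast_div_iff_dvd (K := ℚ) ((A - 1) i 1) (d := 12) (by norm_num)

lemma M₀_eq_map_intCast :
    M₀ = (!![1, 0, 0; 1, 1, 0; -6, -12, 1] : Matrix (Fin 3) (Fin 3) ℤ).map (↑) := by
  ext i j; fin_cases i <;> fin_cases j <;> rfl

lemma Ma₁_eq_map_intCast :
    Ma₁ = (!![0, 0, 1; 0, 1, 0; 1, 0, 0] : Matrix (Fin 3) (Fin 3) ℤ).map (↑) := by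
  ext i j; fin_cases i <;> fin_cases j <;> rfl

lemma Ma₂_eq_map_intCast :
    Ma₂ = (!![-24, 120, 25; -10, 49, 10; 25, -120, -24] :
      Matrix (Fin 3) (Fin 3) ℤ).map (↑) := by
  ext i j; fin_cases i <;> fin_cases j <;> rfl

lemma U_eq_map_intCast :
    U = (!![3, 12, -2; 1, 5, -1; -2, -12, 3] : Matrix (Fin 3) (Fin 3) ℤ).map (↑) := by
  ext i j; fin_cases i <;> fin_cases j <;> rfl

/-- `M₀, M_{a₁}, M_{a₂}` act trivially on the discriminant group of `(ℤ³, Σ₆)`: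
every entry of `(M − I₃)·Σ₆⁻¹` is an integer; whereas `(U − I₃)·Σ₆⁻¹` has a
non-integer entry, so `U ∈ O(M̌₆^⊥) \ O(M̌₆^⊥)*`. -/
theorem discriminant_action :
    (∀ M ∈ ({M₀, Ma₁, Ma₂} : Set (Matrix (Fin 3) (Fin 3) ℚ)),
      ∀ i j : Fin 3, ∃ n : ℤ, ((M - 1) * Sigma6inv) i j = (n : ℚ)) ∧
    (∃ i j : Fin 3, ¬ ∃ n : ℤ, ((U - 1) * Sigma6inv) i j = (n : ℚ)) := by
  refine ⟨?_, ?_⟩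
  · rintro M (rfl | rfl | rfl)
    · exact M₀_eq_map_intCast ▸
        (exists_intCast_eq_sub_one_mul_Sigma6inv_iff _).mpr (by decide)
    · exact Ma₁_eq_map_intCast ▸
        (exists_intCast_eq_sub_one_mul_Sigma6inv_iff _).mpr (by decide)
    · exact Ma₂_eq_map_intCast ▸
        (exists_intCast_eq_sub_one_mul_Sigma6inv_iff _).mpr (by decide)
  · have hU : ¬ ∀ i j, ∃ n : ℤ, ((U - 1) * Sigma6inv) i j = (n : ℚ) := by
      rw [U_eq_map_intCast, exists_intCast_eq_sub_one_mul_Sigma6inv_iff]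
      decide
    simpa only [not_forall] using hU
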